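/- Let A be a commutative MVW-rig and I an ideal of the MVW-rig A. Define a ≡_I b if and only if (a ⊖ b) ⊕ (b ⊖ a) ∈ I. If a ≡_I b and c ≡_I d, then a·c ≡_I b·d; that is, the congruence associated with an MVW-rig ideal is compatible with the product. -/

import Mathlib

/-- The data of an MV-algebra: a binary sum, a negation and a zero. -/
structure MVData (A : Type*) where
  add : A → A → A
  neg : A → A
  zero : A

namespace MVData

variable {A : Type*} (m : MVData A)

/-- The top element `u = ¬0`. -/
def unit : A := m.neg m.zero

/-- Truncated difference `x ⊖ y = ¬(¬x ⊕ y)`. -/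
def ominus (x y : A) : A := m.neg (m.add (m.neg x) y)

/-- The product `x ⊙ y = ¬(¬x ⊕ ¬y)`. -/
def odot (x y : A) : A := m.neg (m.add (m.neg x) (m.neg y))

/-- The MV order: `x ≤ y` iff `x ⊖ y = 0`. -/
def le (x y : A) : Prop := m.ominus x y = m.zero

/-- The lattice join `x ∨ y = (x ⊖ y) ⊕ y`. -/
def sup (x y : A) : A := m.add (m.ominus x y) y

/-- The lattice meet `x ∧ y = ¬(¬x ∨ ¬y)`. -/
def inf (x y : A) : A := m.neg (m.sup (m.neg x) (m.neg y))

/-- The MV-algebra axioms: `(A, ⊕, 0)` is a commutative monoid and `¬` satisfies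
`¬¬x = x`, `x ⊕ ¬0 = ¬0` and `¬(¬x ⊕ y) ⊕ y = ¬(¬y ⊕ x) ⊕ x`. -/
structure IsMV : Prop where
  add_assoc : ∀ x y z : A, m.add (m.add x y) z = m.add x (m.add y z)
  add_comm : ∀ x y : A, m.add x y = m.add y x
  add_zero : ∀ x : A, m.add x m.zero = x
  neg_neg : ∀ x : A, m.neg (m.neg x) = x
  add_unit : ∀ x : A, m.add x (m.neg m.zero) = m.neg m.zero
  lukasiewicz : ∀ x y : A,
    m.add (m.neg (m.add (m.neg x) y)) y = m.add (m.neg (m.add (m.neg y) x)) x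

end MVData

/-! By the triangle inequality for `⊖` and the axiom `xy ⊖ xz ≤ x(y ⊖ z)`,
`ac ⊖ bd ≤ (ac ⊖ bc) ⊕ (bc ⊖ bd) ≤ c(a ⊖ b) ⊕ b(c ⊖ d)`, which lies in `I` by absorbency,
as `I` is downward closed and `a ⊖ b ≤ (a ⊖ b) ⊕ (b ⊖ a)`, `c ⊖ d ≤ (c ⊖ d) ⊕ (d ⊖ c)`.
Swapping `(a, c)` with `(b, d)` handles `bd ⊖ ac`. -/

namespace MVData.IsMV

variable {A : Type*} {m : MVData A} (hmv : m.IsMV)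
include hmv

theorem neg_add_self (x : A) : m.add (m.neg x) x = m.neg m.zero := by
  have h := hmv.lukasiewicz x (m.neg m.zero)
  rwa [hmv.add_unit, hmv.neg_neg, hmv.add_comm m.zero, hmv.add_zero, eq_comm] at h

theorem le_iff_neg_add_eq_unit {x y : A} : m.le x y ↔ m.add (m.neg x) y = m.neg m.zero := by
  unfold MVData.le MVData.ominus
  constructor
  · intro h
    rw [← h, hmv.neg_neg]
  · intro h
    rw [h, hmv.neg_neg]

theorem le_refl (x : A) : m.le x x :=
  (hmv.le_iff_neg_add_eq_unit).2 (hmv.neg_add_self x)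

theorem le_add_right (x t : A) : m.le x (m.add x t) := by
  rw [hmv.le_iff_neg_add_eq_unit, ← hmv.add_assoc, hmv.neg_add_self, hmv.add_comm, hmv.add_unit]

theorem le_add_left (x t : A) : m.le t (m.add x t) := by
  rw [hmv.add_comm]
  exact hmv.le_add_right t x

theorem eq_add_ominus_of_le {x y : A} (h : m.le x y) : y = m.add x (m.ominus y x) := by
  have hl := hmv.lukasiewicz x y
  unfold MVData.le MVData.ominus at *
  rwa [h, hmv.add_comm m.zero, hmv.add_zero, hmv.add_comm _ x] at hl

theorem le_trans {x y z : A} (hxy : m.le x y) (hyz : m.le y z) : m.le x z := by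
  rw [hmv.eq_add_ominus_of_le hyz, hmv.eq_add_ominus_of_le hxy, hmv.add_assoc]
  exact hmv.le_add_right _ _

theorem add_le_add_left {x y : A} (t : A) (h : m.le x y) : m.le (m.add t x) (m.add t y) := by
  rw [hmv.eq_add_ominus_of_le h, ← hmv.add_assoc]
  exact hmv.le_add_right _ _

theorem add_le_add {x x' y y' : A} (hx : m.le x x') (hy : m.le y y') :
    m.le (m.add x y) (m.add x' y') := by
  refine hmv.le_trans (hmv.add_le_add_left x hy) ?_
  rw [hmv.add_comm x, hmv.add_comm x']
  exact hmv.add_le_add_left y' hx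

theorem ominus_le_iff {x y z : A} : m.le (m.ominus x y) z ↔ m.le x (m.add y z) := by
  rw [hmv.le_iff_neg_add_eq_unit, hmv.le_iff_neg_add_eq_unit]
  unfold MVData.ominus
  rw [hmv.neg_neg, hmv.add_assoc]

theorem le_ominus_add (x y : A) : m.le x (m.add (m.ominus x y) y) := by
  unfold MVData.ominus
  rw [hmv.lukasiewicz, hmv.add_comm _ x]
  exact hmv.le_add_right _ _

theorem ominus_le_add_ominus (x y z : A) :
    m.le (m.ominus x z) (m.add (m.ominus x y) (m.ominus y z)) := by
  rw [hmv.ominus_le_iff]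
  refine hmv.le_trans (hmv.le_ominus_add x y) ?_
  refine hmv.le_trans (hmv.add_le_add_left _ (hmv.le_ominus_add y z)) ?_
  rw [← hmv.add_assoc, hmv.add_comm]
  exact hmv.le_refl _

theorem ominus_mul_mul_le (mul : A → A → A) (mul_comm : ∀ a b : A, mul a b = mul b a)
    (ominus_mul_le : ∀ a b c : A, m.le (m.ominus (mul a b) (mul a c)) (mul a (m.ominus b c)))
    (a b c d : A) :
    m.le (m.ominus (mul a c) (mul b d))
      (m.add (mul c (m.ominus a b)) (mul b (m.ominus c d))) := by
  have hac : m.le (m.ominus (mul a c) (mul b c)) (mul c (m.ominus a b)) := by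
    simpa only [mul_comm c] using ominus_mul_le c a b
  exact hmv.le_trans (hmv.ominus_le_add_ominus _ (mul b c) _)
    (hmv.add_le_add hac (ominus_mul_le b c d))

theorem ominus_mul_mul_mem (mul : A → A → A) (mul_comm : ∀ a b : A, mul a b = mul b a)
    (ominus_mul_le : ∀ a b c : A, m.le (m.ominus (mul a b) (mul a c)) (mul a (m.ominus b c)))
    {I : Set A} (hdown : ∀ a b : A, m.le a b → b ∈ I → a ∈ I)
    (haddI : ∀ a b : A, a ∈ I → b ∈ I → m.add a b ∈ I)
    (habs : ∀ a b : A, a ∈ I → mul a b ∈ I)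
    (a b c d : A) (hab : m.ominus a b ∈ I) (hcd : m.ominus c d ∈ I) :
    m.ominus (mul a c) (mul b d) ∈ I := by
  refine hdown _ _ (hmv.ominus_mul_mul_le mul mul_comm ominus_mul_le a b c d) (haddI _ _ ?_ ?_)
  · rw [mul_comm]
    exact habs _ _ hab
  · rw [mul_comm]
    exact habs _ _ hcd

end MVData.IsMV

theorem congruence_compatible_with_product_general {A : Type*} (m : MVData A) (hmv : m.IsMV)
    (mul : A → A → A)
    (mul_comm : ∀ a b : A, mul a b = mul b a)
    (ominus_mul_le : ∀ a b c : A,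
      m.le (m.ominus (mul a b) (mul a c)) (mul a (m.ominus b c)))
    (I : Set A)
    (hdown : ∀ a b : A, m.le a b → b ∈ I → a ∈ I)
    (haddI : ∀ a b : A, a ∈ I → b ∈ I → m.add a b ∈ I)
    (habs : ∀ a b : A, a ∈ I → mul a b ∈ I)
    (a b c d : A)
    (hab : m.add (m.ominus a b) (m.ominus b a) ∈ I)
    (hcd : m.add (m.ominus c d) (m.ominus d c) ∈ I) :
    m.add (m.ominus (mul a c) (mul b d)) (m.ominus (mul b d) (mul a c)) ∈ I := by
  have hmem := hmv.ominus_mul_mul_mem mul mul_comm ominus_mul_le hdown haddI habs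
  exact haddI _ _
    (hmem a b c d (hdown _ _ (hmv.le_add_right _ _) hab) (hdown _ _ (hmv.le_add_right _ _) hcd))
    (hmem b a d c (hdown _ _ (hmv.le_add_left _ _) hab) (hdown _ _ (hmv.le_add_left _ _) hcd))

/-- In a commutative MVW-rig `A` with an MVW-rig ideal `I`
(an MV-ideal that is absorbent), the congruence `a ≡_I b ↔ (a ⊖ b) ⊕ (b ⊖ a) ∈ I`
is compatible with the product: `a ≡_I b` and `c ≡_I d` imply `a·c ≡_I b·d`. -/
theorem congruence_compatible_with_product {A : Type*} (m : MVData A) (hmv : m.IsMV)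
    (mul : A → A → A)
    (mul_assoc : ∀ a b c : A, mul (mul a b) c = mul a (mul b c))
    (mul_comm : ∀ a b : A, mul a b = mul b a)
    (mul_zero : ∀ a : A, mul a m.zero = m.zero)
    (mul_add_le : ∀ a b c : A, m.le (mul a (m.add b c)) (m.add (mul a b) (mul a c)))
    (ominus_mul_le : ∀ a b c : A,
      m.le (m.ominus (mul a b) (mul a c)) (mul a (m.ominus b c)))
    (I : Set A) (hne : I.Nonempty)
    (hdown : ∀ a b : A, m.le a b → b ∈ I → a ∈ I)
    (haddI : ∀ a b : A, a ∈ I → b ∈ I → m.add a b ∈ I)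
    (habs : ∀ a b : A, a ∈ I → mul a b ∈ I)
    (a b c d : A)
    (hab : m.add (m.ominus a b) (m.ominus b a) ∈ I)
    (hcd : m.add (m.ominus c d) (m.ominus d c) ∈ I) :
    m.add (m.ominus (mul a c) (mul b d)) (m.ominus (mul b d) (mul a c)) ∈ I :=
  congruence_compatible_with_product_general m hmv mul mul_comm ominus_mul_le I hdown haddI habs a b
    c d hab hcd
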